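/- Every n×n unitary matrix U can be written as U = O₁ D O₂, where O₁, O₂ are real orthogonal n×n matrices and D is a diagonal unitary matrix with entries e^{iθ_l} for θ_l ∈ [0, π). -/

import Mathlib

/-!
The matrix `S = U Uᵀ` is unitary and symmetric, so its real and imaginary parts are commuting
real symmetric matrices; one real orthogonal `O` diagonalizes both, giving `Oᵀ S O = diag μ` with
`|μ_l| = 1`. Write `μ_l = e^{2iθ_l}` with `θ_l ∈ [0, π)` and `D = diag (e^{iθ_l})`. Then
`V = D⁻¹ Oᵀ U` is unitary with `V Vᵀ = D⁻¹ D² D⁻¹ = 1`, so `V` is real orthogonal and `U = O D V`.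
-/

open Matrix Module.End

namespace LinearMap.IsSymmetric

variable {𝕜 E : Type*} [RCLike 𝕜] [NormedAddCommGroup E] [InnerProductSpace 𝕜 E]
  [FiniteDimensional 𝕜 E] {A B : E →ₗ[𝕜] E} {n : ℕ}

theorem exists_orthonormalBasis_mem_eigenspace_inf_eigenspace (hA : A.IsSymmetric)
    (hB : B.IsSymmetric) (hAB : Commute A B) (hn : Module.finrank 𝕜 E = n) :
    ∃ (b : OrthonormalBasis (Fin n) 𝕜 E) (p q : Fin n → 𝕜),
      ∀ j, b j ∈ eigenspace A (p j) ⊓ eigenspace B (q j) := by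
  classical
  let V : 𝕜 × 𝕜 → Submodule 𝕜 E := fun μ => eigenspace A μ.2 ⊓ eigenspace B μ.1
  have hV : OrthogonalFamily 𝕜 (fun μ => V μ) fun μ => (V μ).subtypeₗᵢ :=
    hA.orthogonalFamily_eigenspace_inf_eigenspace hB
  have hint : DirectSum.IsInternal fun μ : {μ // V μ ≠ ⊥} => V μ :=
    DirectSum.isInternal_ne_bot_iff.mpr (hA.directSum_isInternal_of_commute hB hAB)
  -- only finitely many joint eigenspaces are nonzero, so they can index an orthonormal basis
  let : Fintype {μ // V μ ≠ ⊥} := hV.independent.fintypeNeBotOfFiniteDimensional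
  have hV' := hV.comp (Subtype.val_injective (p := fun μ => V μ ≠ ⊥))
  exact ⟨hint.subordinateOrthonormalBasis hn hV',
    fun j => (hint.subordinateOrthonormalBasisIndex hn j hV').1.2,
    fun j => (hint.subordinateOrthonormalBasisIndex hn j hV').1.1,
    fun j => hint.subordinateOrthonormalBasis_subordinate hn j hV'⟩

end LinearMap.IsSymmetric

namespace Complex

theorem mem_unitary_iff_norm_eq_one {z : ℂ} : z ∈ unitary ℂ ↔ ‖z‖ = 1 := by
  rw [Unitary.mem_iff_star_mul_self, star_def, conj_mul']
  norm_cast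
  exact pow_eq_one_iff_of_nonneg (norm_nonneg z) two_ne_zero

theorem exists_mem_Ico_exp_I_mul_sq_eq {z : ℂ} (hz : ‖z‖ = 1) :
    ∃ θ ∈ Set.Ico 0 Real.pi, exp (I * θ) ^ 2 = z := by
  refine ⟨toIcoMod Real.pi_pos 0 (z.arg / 2), by simpa using toIcoMod_mem_Ico Real.pi_pos 0 _, ?_⟩
  set k := toIcoDiv Real.pi_pos 0 (z.arg / 2)
  have hθ : toIcoMod Real.pi_pos 0 (z.arg / 2) = z.arg / 2 - k • Real.pi := rfl
  calc exp (I * ↑(toIcoMod Real.pi_pos 0 (z.arg / 2))) ^ 2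
      = exp (z.arg * I) / exp (k * (2 * Real.pi * I)) := by
        rw [← exp_nat_mul, ← exp_sub, hθ]
        push_cast
        ring_nf
    _ = z := by
        rw [exp_int_mul_two_pi_mul_I, div_one, ← one_mul (exp _), ← ofReal_one, ← hz,
          norm_mul_exp_arg_mul_I]

end Complex

namespace Matrix

section RealComplex

variable {ι : Type*}

theorem map_ofReal_mul [Fintype ι] {l : Type*} (A : Matrix l ι ℝ) (B : Matrix ι l ℝ) :
    (A * B).map Complex.ofReal = A.map Complex.ofReal * B.map Complex.ofReal :=
  Matrix.map_mul (f := Complex.ofRealHom)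

theorem star_map_ofReal (A : Matrix ι ι ℝ) :
    star (A.map Complex.ofReal) = (A.map Complex.ofReal)ᵀ := by
  rw [star_eq_conjTranspose, ← conjTranspose_map _ (fun _ => (Complex.conj_ofReal _).symm),
    conjTranspose_eq_transpose_of_trivial, transpose_map]

theorem map_ofReal_mem_unitaryGroup [Fintype ι] [DecidableEq ι] {O : Matrix ι ι ℝ}
    (hO : Oᵀ * O = 1) : O.map Complex.ofReal ∈ unitaryGroup ι ℂ := by
  rw [mem_unitaryGroup_iff', star_map_ofReal, ← transpose_map, ← map_ofReal_mul, hO,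
    Matrix.map_one _ Complex.ofReal_zero Complex.ofReal_one]

theorem re_map_ofReal_mul_mul_map_ofReal {l m o p : Type*} [Fintype m] [Fintype o]
    (A : Matrix l m ℝ) (S : Matrix m o ℂ) (B : Matrix o p ℝ) (i : l) (j : p) :
    ((A.map Complex.ofReal * S * B.map Complex.ofReal) i j).re =
      (A * S.map Complex.re * B) i j := by
  simp [mul_apply, Complex.re_sum, Finset.sum_mul]

theorem im_map_ofReal_mul_mul_map_ofReal {l m o p : Type*} [Fintype m] [Fintype o]
    (A : Matrix l m ℝ) (S : Matrix m o ℂ) (B : Matrix o p ℝ) (i : l) (j : p) :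
    ((A.map Complex.ofReal * S * B.map Complex.ofReal) i j).im =
      (A * S.map Complex.im * B) i j := by
  simp [mul_apply, Complex.im_sum, Finset.sum_mul]

theorem map_re_map_ofReal_of_conjTranspose_eq_transpose {W : Matrix ι ι ℂ} (h : Wᴴ = Wᵀ) :
    (W.map Complex.re).map Complex.ofReal = W := by
  ext i j
  exact Complex.conj_eq_iff_re.mp congr($h j i)

theorem exists_orthogonal_map_ofReal_eq [Fintype ι] [DecidableEq ι] {W : Matrix ι ι ℂ}
    (hW : W ∈ unitaryGroup ι ℂ) (hWT : W * Wᵀ = 1) :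
    ∃ R : Matrix ι ι ℝ, Rᵀ * R = 1 ∧ R.map Complex.ofReal = W := by
  -- `Wᴴ` and `Wᵀ` are both inverses of `W`, so `W` equals its entrywise conjugate
  have hconj : Wᴴ = Wᵀ := left_inv_eq_right_inv (mem_unitaryGroup_iff'.mp hW) hWT
  have hreal := map_re_map_ofReal_of_conjTranspose_eq_transpose hconj
  refine ⟨W.map Complex.re, map_injective Complex.ofReal_injective ?_, hreal⟩
  simp only [map_ofReal_mul, transpose_map, hreal]
  rw [← hconj, ← star_eq_conjTranspose, mem_unitaryGroup_iff'.mp hW,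
    Matrix.map_one _ Complex.ofReal_zero Complex.ofReal_one]

end RealComplex

theorem diagonal_mem_unitaryGroup_iff {n α : Type*} [Fintype n] [DecidableEq n] [CommRing α]
    [StarRing α] {v : n → α} : diagonal v ∈ unitaryGroup n α ↔ ∀ i, v i ∈ unitary α := by
  simp only [mem_unitaryGroup_iff', Unitary.mem_iff_star_mul_self, star_eq_conjTranspose,
    diagonal_conjTranspose, diagonal_mul_diagonal, ← diagonal_one, diagonal_eq_diagonal_iff,
    Pi.star_apply]

theorem IsHermitian.exists_unitary_conj_diagonal_of_commute {𝕜 : Type*} [RCLike 𝕜] {n : ℕ}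
    {A B : Matrix (Fin n) (Fin n) 𝕜} (hA : A.IsHermitian) (hB : B.IsHermitian)
    (hAB : Commute A B) :
    ∃ U ∈ unitaryGroup (Fin n) 𝕜, ∃ p q : Fin n → 𝕜,
      star U * A * U = diagonal p ∧ star U * B * U = diagonal q := by
  obtain ⟨b, p, q, hb⟩ :=
    (isSymmetric_toEuclideanLin_iff.mpr hA).exists_orthonormalBasis_mem_eigenspace_inf_eigenspace
      (isSymmetric_toEuclideanLin_iff.mpr hB) (hAB.map (toLpLinAlgEquiv 2))
      finrank_euclideanSpace_fin
  set U := (EuclideanSpace.basisFun (Fin n) 𝕜).toBasis.toMatrix b.toBasis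
  have hU : U ∈ unitaryGroup (Fin n) 𝕜 :=
    (EuclideanSpace.basisFun (Fin n) 𝕜).toMatrix_orthonormalBasis_mem_unitary b
  have hUij : ∀ i j, U i j = b j i := fun _ _ => rfl
  have conj_eq_diagonal : ∀ (M : Matrix (Fin n) (Fin n) 𝕜) (r : Fin n → 𝕜),
      (∀ j, b j ∈ eigenspace (toEuclideanLin M) (r j)) → star U * M * U = diagonal r := by
    intro M r hM
    have hMU : M * U = U * diagonal r := by
      ext i j
      have hj := congr(WithLp.ofLp $(mem_eigenspace_iff.mp (hM j)) i)
      simp only [ofLp_toLpLin, PiLp.smul_apply] at hj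
      rw [mul_diagonal, Matrix.mul_apply]
      simpa [hUij, mulVec, dotProduct, mul_comm] using hj
    rw [mul_assoc, hMU, ← mul_assoc, mem_unitaryGroup_iff'.mp hU, one_mul]
  exact ⟨U, hU, p, q, conj_eq_diagonal A p fun j => (hb j).1,
    conj_eq_diagonal B q fun j => (hb j).2⟩

theorem IsSymm.commute_map_re_map_im {ι : Type*} [Fintype ι] {S : Matrix ι ι ℂ}
    (hS : S.IsSymm) [IsStarNormal S] : Commute (S.map Complex.re) (S.map Complex.im) := by
  ext i j
  -- compare imaginary parts of the two sides of `Sᴴ * S = S * Sᴴ`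
  have h := congr(($((star_comm_self' S)) i j).im)
  simp only [star_eq_conjTranspose, mul_apply, conjTranspose_apply, Complex.im_sum,
    Complex.mul_im, Complex.star_def, Complex.conj_re, Complex.conj_im, hS.apply i,
    hS.apply j, neg_mul, mul_neg, Finset.sum_add_distrib, Finset.sum_neg_distrib] at h
  simp only [mul_apply, map_apply, hS.apply j]
  linarith

theorem IsSymm.exists_orthogonal_conj_diagonal {n : ℕ} {S : Matrix (Fin n) (Fin n) ℂ}
    (hS : S.IsSymm) [IsStarNormal S] :
    ∃ (O : Matrix (Fin n) (Fin n) ℝ) (μ : Fin n → ℂ),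
      Oᵀ * O = 1 ∧ (O.map Complex.ofReal)ᵀ * S * O.map Complex.ofReal = diagonal μ := by
  obtain ⟨O, hO, p, q, hp, hq⟩ :=
    (isHermitian_iff_isSymm.mpr (hS.map Complex.re)).exists_unitary_conj_diagonal_of_commute
      (isHermitian_iff_isSymm.mpr (hS.map Complex.im)) hS.commute_map_re_map_im
  have hOT : star O = Oᵀ := by rw [star_eq_conjTranspose, conjTranspose_eq_transpose_of_trivial]
  rw [hOT] at hp hq
  refine ⟨O, fun j => ⟨p j, q j⟩, hOT ▸ mem_unitaryGroup_iff'.mp hO, ?_⟩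
  ext i j
  rw [← transpose_map]
  apply Complex.ext
  · rw [re_map_ofReal_mul_mul_map_ofReal, hp]
    by_cases h : i = j <;> simp [h]
  · rw [im_map_ofReal_mul_mul_map_ofReal, hq]
    by_cases h : i = j <;> simp [h]

theorem exists_orthogonal_eq_map_ofReal_mul_diagonal_mul {ι : Type*} [Fintype ι] [DecidableEq ι]
    {U : Matrix ι ι ℂ} {O : Matrix ι ι ℝ} {d : ι → ℂ} (hU : U ∈ unitaryGroup ι ℂ)
    (hO : Oᵀ * O = 1) (hd : ∀ i, d i ∈ unitary ℂ)
    (hUO : (O.map Complex.ofReal)ᵀ * (U * Uᵀ) * O.map Complex.ofReal =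
      diagonal d * diagonal d) :
    ∃ R : Matrix ι ι ℝ, Rᵀ * R = 1 ∧
      U = O.map Complex.ofReal * diagonal d * R.map Complex.ofReal := by
  set Oc := O.map Complex.ofReal
  set D := diagonal d
  have hOc : Oc ∈ unitaryGroup ι ℂ := map_ofReal_mem_unitaryGroup hO
  have hOcT : star Oc = Ocᵀ := star_map_ofReal O
  have hD : D ∈ unitaryGroup ι ℂ := diagonal_mem_unitaryGroup_iff.mpr hd
  have hDT : (star D)ᵀ = star D := by
    simp only [D, star_eq_conjTranspose, diagonal_conjTranspose, diagonal_transpose]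
  set V := star D * star Oc * U
  have hV : V ∈ unitaryGroup ι ℂ :=
    Submonoid.mul_mem _ (Submonoid.mul_mem _ (Unitary.star_mem hD) (Unitary.star_mem hOc)) hU
  have hVVT : V * Vᵀ = 1 := calc
    V * Vᵀ = star D * (Ocᵀ * (U * Uᵀ) * Oc) * (star D)ᵀ := by
      simp only [V, transpose_mul, hOcT, transpose_transpose, mul_assoc]
    _ = (star D * D) * (D * star D) := by rw [hUO, hDT]; simp only [mul_assoc]
    _ = 1 := by rw [Unitary.star_mul_self_of_mem hD, Unitary.mul_star_self_of_mem hD, one_mul]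
  obtain ⟨R, hR, hRV⟩ := exists_orthogonal_map_ofReal_eq hV hVVT
  refine ⟨R, hR, ?_⟩
  rw [hRV, mul_assoc Oc, ← mul_assoc D, ← mul_assoc D, Unitary.mul_star_self_of_mem hD, one_mul,
    ← mul_assoc, Unitary.mul_star_self_of_mem hOc, one_mul]

end Matrix

theorem odo_decomposition (n : ℕ) (U : Matrix (Fin n) (Fin n) ℂ)
    (hU : Uᴴ * U = 1) :
    ∃ (O₁ O₂ : Matrix (Fin n) (Fin n) ℝ) (θ : Fin n → ℝ),
      O₁ᵀ * O₁ = 1 ∧ O₂ᵀ * O₂ = 1 ∧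
      (∀ l, θ l ∈ Set.Ico 0 Real.pi) ∧
      U = (O₁.map (Complex.ofReal)) *
          Matrix.diagonal (fun l => Complex.exp (Complex.I * (θ l : ℂ))) *
          (O₂.map (Complex.ofReal)) := by
  have hUU : U ∈ unitaryGroup (Fin n) ℂ := mem_unitaryGroup_iff'.mpr hU
  have hS : U * Uᵀ ∈ unitaryGroup (Fin n) ℂ :=
    Submonoid.mul_mem _ hUU (transpose_mem_unitaryGroup_iff.mpr hUU)
  have := isStarNormal_of_mem_unitary hS
  obtain ⟨O₁, μ, hO₁, hμ⟩ := (isSymm_mul_transpose_self U).exists_orthogonal_conj_diagonal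
  have hμ_unitary : ∀ l, μ l ∈ unitary ℂ := by
    have hO₁U := map_ofReal_mem_unitaryGroup hO₁
    rw [← diagonal_mem_unitaryGroup_iff, ← hμ, ← star_map_ofReal]
    exact Submonoid.mul_mem _ (Submonoid.mul_mem _ (Unitary.star_mem hO₁U) hS) hO₁U
  choose θ hθ hθμ using fun l => Complex.exists_mem_Ico_exp_I_mul_sq_eq
    (Complex.mem_unitary_iff_norm_eq_one.mp (hμ_unitary l))
  obtain ⟨O₂, hO₂, hUO⟩ := exists_orthogonal_eq_map_ofReal_mul_diagonal_mul hUU hO₁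
    (fun l => Complex.mem_unitary_iff_norm_eq_one.mpr (Complex.norm_exp_I_mul_ofReal (θ l)))
    (by rw [hμ, diagonal_mul_diagonal]; simp only [← sq, hθμ])
  exact ⟨O₁, O₂, θ, hO₁, hO₂, hθ, hUO⟩
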